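/- arXiv:2212.11193 — 2 statements merged into one kernel-verified Lean document; each statement's English description precedes it below -/
import Mathlib

section
/- Let F be a field, B ⊆ [n]×[n], and ω a function assigning a nonzero element of F to each permutation. Define D_ω(A) = Σ_{σ∈S_m} ω(σ) Π_i A(i,σ(i)) for A ∈ M_m(F), and the ω-rank of A ∈ M_n(F) as the largest k for which some k×k submatrix B of A has D_ω(B) ≠ 0. Then the maximal ω-rank of a matrix in M_B(F) equals the bipartite matching number ν_b(B). -/
open Matrix

/-- A bipartite matching: all first coordinates distinct, all second coordinates distinct. -/
def IsBipMatching {n : ℕ} (B₀ : Finset (Fin n × Fin n)) : Prop :=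
  ∀ p ∈ B₀, ∀ q ∈ B₀, p ≠ q → p.1 ≠ q.1 ∧ p.2 ≠ q.2

/-- The bipartite matching number of a set of positions. -/
noncomputable def nuB {n : ℕ} (B : Set (Fin n × Fin n)) : ℕ :=
  sSup {m | ∃ B₀ : Finset (Fin n × Fin n), ↑B₀ ⊆ B ∧ IsBipMatching B₀ ∧ B₀.card = m}

/-- The Schur functional `D_ω`. -/
def Dw {F : Type*} [Field F] (ω : ∀ m : ℕ, Equiv.Perm (Fin m) → F) {m : ℕ}
    (A : Matrix (Fin m) (Fin m) F) : F :=
  ∑ σ : Equiv.Perm (Fin m), ω m σ * ∏ i, A i (σ i)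

/-- The ω-rank: the largest k such that some k×k submatrix B has `D_ω B ≠ 0`. -/
noncomputable def rkw {F : Type*} [Field F] (ω : ∀ m : ℕ, Equiv.Perm (Fin m) → F) {n : ℕ}
    (A : Matrix (Fin n) (Fin n) F) : ℕ :=
  sSup {k | ∃ I J : Fin k → Fin n, StrictMono I ∧ StrictMono J ∧
    Dw ω (A.submatrix I J) ≠ 0}

/-- The permanent. -/
def per {F : Type*} [Field F] {m : ℕ} (A : Matrix (Fin m) (Fin m) F) : F :=
  ∑ σ : Equiv.Perm (Fin m), ∏ i, A i (σ i)

/-- The permanental rank. -/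
noncomputable def prk {F : Type*} [Field F] {n : ℕ} (A : Matrix (Fin n) (Fin n) F) : ℕ :=
  sSup {k | ∃ I J : Fin k → Fin n, StrictMono I ∧ StrictMono J ∧
    per (A.submatrix I J) ≠ 0}

/-- Lexicographic (row-major) order on positions. -/
def LexLt {n : ℕ} (p q : Fin n × Fin n) : Prop :=
  p.1 < q.1 ∨ (p.1 = q.1 ∧ p.2 < q.2)

/-- `BW W` is the set of lexicographically minimal support positions of nonzero matrices in `W`. -/
def BW {F : Type*} [Field F] {n : ℕ} (W : Submodule F (Matrix (Fin n) (Fin n) F)) :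
    Set (Fin n × Fin n) :=
  {p | ∃ A ∈ W, A ≠ 0 ∧ A p.1 p.2 ≠ 0 ∧ ∀ q, LexLt q p → A q.1 q.2 = 0}

/-- Alternating matrix: `A = -Aᵗ` and zero diagonal. -/
def IsAlt {F : Type*} [Field F] {n : ℕ} (A : Matrix (Fin n) (Fin n) F) : Prop :=
  Aᵀ = -A ∧ ∀ i, A i i = 0

/-- A matching in a graph: pairwise disjoint edges. -/
def IsGraphMatching {n : ℕ} (M : Finset (Sym2 (Fin n))) : Prop :=
  ∀ e ∈ M, ∀ f ∈ M, e ≠ f → ∀ x : Fin n, x ∈ e → x ∉ f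

/-- The matching number of a graph. -/
noncomputable def nuG {n : ℕ} (G : Set (Sym2 (Fin n))) : ℕ :=
  sSup {m | ∃ M : Finset (Sym2 (Fin n)), ↑M ⊆ G ∧ IsGraphMatching M ∧ M.card = m}

/-- `GU U`: edges `{i,j}` arising as lexicographically minimal support positions in `U`. -/
def GU {F : Type*} [Field F] {n : ℕ} (U : Submodule F (Matrix (Fin n) (Fin n) F)) :
    Set (Sym2 (Fin n)) :=
  {e | ∃ A ∈ U, ∃ i j : Fin n, A ≠ 0 ∧ A i j ≠ 0 ∧
    (∀ q : Fin n × Fin n, LexLt q (i, j) → A q.1 q.2 = 0) ∧ e = s(i, j)}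


/-! A nonzero `D_ω(A[I,J])` has a nonzero term, i.e. a permutation `σ` with all
`A(I i, J (σ i)) ≠ 0`; these positions form a matching in `B` of size `|I|`. Conversely, a
matching `(r k, c k)` in `B` gives a 0/1 matrix supported on it. After sorting rows and columns,
its submatrix on the matched rows and columns is a permutation matrix of some `τ`, and
`D_ω` of that matrix is `ω(τ) ≠ 0`. -/

section

variable {F : Type*} [Field F]

lemma exists_forall_ne_zero_of_Dw_ne_zero {ω : ∀ m : ℕ, Equiv.Perm (Fin m) → F} {m : ℕ}
    {A : Matrix (Fin m) (Fin m) F} (hD : Dw ω A ≠ 0) :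
    ∃ σ : Equiv.Perm (Fin m), ∀ i, A i (σ i) ≠ 0 := by
  obtain ⟨σ, -, hσ⟩ := Finset.exists_ne_zero_of_sum_ne_zero hD
  exact ⟨σ, fun i =>
    Finset.prod_ne_zero_iff.mp (right_ne_zero_of_mul hσ) i (Finset.mem_univ i)⟩

lemma Dw_permMatrix (ω : ∀ m : ℕ, Equiv.Perm (Fin m) → F) {m : ℕ}
    (τ : Equiv.Perm (Fin m)) :
    Dw ω (τ.permMatrix F) = ω m τ := by
  rw [Dw, Finset.sum_eq_single τ]
  · simp
  · intro σ _ hστ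
    obtain ⟨i, hi⟩ : ∃ i, σ i ≠ τ i := by
      by_contra! h
      exact hστ (Equiv.ext h)
    rw [Finset.prod_eq_zero (Finset.mem_univ i) (by simp [Ne.symm hi]), mul_zero]
  · simp

end

section

variable {n : ℕ}

lemma IsBipMatching.card_le {B₀ : Finset (Fin n × Fin n)} (hM : IsBipMatching B₀) :
    B₀.card ≤ n := by
  simpa using Finset.card_le_card_of_injOn Prod.fst (fun _ _ => Finset.mem_univ _)
    fun p hp q hq h => by_contra fun hpq => (hM p hp q hq hpq).1 h

lemma IsBipMatching.exists_injective {B₀ : Finset (Fin n × Fin n)} (hM : IsBipMatching B₀) :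
    ∃ r c : Fin B₀.card → Fin n, Function.Injective r ∧ Function.Injective c ∧
      ∀ k, (r k, c k) ∈ B₀ := by
  set e := B₀.equivFin.symm
  have eq_of_apply_eq {k l} (h : (e k).1.1 = (e l).1.1 ∨ (e k).1.2 = (e l).1.2) : k = l := by
    by_contra hkl
    have hM' := hM _ (e k).2 _ (e l).2 (Subtype.coe_injective.ne (e.injective.ne hkl))
    tauto
  exact ⟨fun k => (e k).1.1, fun k => (e k).1.2, fun _ _ h => eq_of_apply_eq (.inl h),
    fun _ _ h => eq_of_apply_eq (.inr h), fun k => (e k).2⟩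

lemma le_nuB {B : Set (Fin n × Fin n)} {m : ℕ} {r c : Fin m → Fin n}
    (hr : Function.Injective r) (hc : Function.Injective c) (hB : ∀ k, (r k, c k) ∈ B) :
    m ≤ nuB B := by
  classical
  refine le_csSup ⟨n, fun _ ⟨B₀, _, hM, hcard⟩ => hcard ▸ hM.card_le⟩
    ⟨Finset.univ.image fun k => (r k, c k), ?_, ?_, ?_⟩
  · simpa [Set.range_subset_iff] using hB
  · simp only [IsBipMatching, Finset.mem_image, Finset.mem_univ, true_and]
    rintro _ ⟨k, rfl⟩ _ ⟨l, rfl⟩ hkl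
    have : k ≠ l := fun h => hkl (h ▸ rfl)
    exact ⟨hr.ne this, hc.ne this⟩
  · rw [Finset.card_image_of_injective _ fun k l h => hr (congrArg Prod.fst h)]
    simp

lemma Function.Injective.strictMono_comp_sort {α : Type*} [LinearOrder α] {m : ℕ}
    {r : Fin m → α} (hr : Function.Injective r) : StrictMono (r ∘ Tuple.sort r) :=
  (Tuple.monotone_sort r).strictMono_of_injective (hr.comp (Tuple.sort r).injective)

end

section

variable {F : Type*} [Field F] {n : ℕ}

lemma rkw_set_subset_Iic (ω : ∀ m : ℕ, Equiv.Perm (Fin m) → F)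
    (A : Matrix (Fin n) (Fin n) F) :
    {k | ∃ I J : Fin k → Fin n, StrictMono I ∧ StrictMono J ∧
      Dw ω (A.submatrix I J) ≠ 0} ⊆ Set.Iic n :=
  fun _ ⟨I, _, hI, _⟩ => by simpa using Fintype.card_le_of_injective I hI.injective

lemma rkw_le (ω : ∀ m : ℕ, Equiv.Perm (Fin m) → F) (A : Matrix (Fin n) (Fin n) F) :
    rkw ω A ≤ n :=
  csSup_le' (rkw_set_subset_Iic ω A)

lemma le_rkw {ω : ∀ m : ℕ, Equiv.Perm (Fin m) → F} {A : Matrix (Fin n) (Fin n) F} {k : ℕ}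
    {I J : Fin k → Fin n} (hI : StrictMono I) (hJ : StrictMono J)
    (hD : Dw ω (A.submatrix I J) ≠ 0) : k ≤ rkw ω A :=
  le_csSup ⟨n, rkw_set_subset_Iic ω A⟩ ⟨I, J, hI, hJ, hD⟩

lemma rkw_le_nuB {ω : ∀ m : ℕ, Equiv.Perm (Fin m) → F} {B : Set (Fin n × Fin n)}
    {A : Matrix (Fin n) (Fin n) F} (hA : ∀ i j, (i, j) ∉ B → A i j = 0) :
    rkw ω A ≤ nuB B := by
  refine csSup_le' ?_
  rintro k ⟨I, J, hI, hJ, hD⟩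
  obtain ⟨σ, hσ⟩ := exists_forall_ne_zero_of_Dw_ne_zero hD
  exact le_nuB hI.injective (hJ.injective.comp σ.injective)
    fun i => by_contra fun hi => hσ i (hA _ _ hi)

noncomputable def matchingMatrix {m : ℕ} (r c : Fin m → Fin n) : Matrix (Fin n) (Fin n) F :=
  Matrix.of fun a b => by classical exact if ∃ k, r k = a ∧ c k = b then 1 else 0

lemma submatrix_matchingMatrix {m : ℕ} {r c : Fin m → Fin n} (hr : Function.Injective r)
    (hc : Function.Injective c) :
    (matchingMatrix r c : Matrix (Fin n) (Fin n) F).submatrix (r ∘ Tuple.sort r)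
      (c ∘ Tuple.sort c) =
        Equiv.Perm.permMatrix F ((Tuple.sort r).trans (Tuple.sort c).symm) := by
  ext i j
  simp only [matchingMatrix, Matrix.submatrix_apply, Matrix.of_apply, Function.comp_apply,
    Equiv.Perm.permMatrix, PEquiv.toMatrix_apply, Equiv.toPEquiv_apply, Option.mem_def,
    Option.some.injEq, Equiv.trans_apply, Equiv.symm_apply_eq, hr.eq_iff, hc.eq_iff,
    exists_eq_left]

lemma le_rkw_matchingMatrix {ω : ∀ m : ℕ, Equiv.Perm (Fin m) → F}
    (hω : ∀ m σ, ω m σ ≠ 0) {m : ℕ} {r c : Fin m → Fin n} (hr : Function.Injective r)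
    (hc : Function.Injective c) :
    m ≤ rkw ω (matchingMatrix r c : Matrix (Fin n) (Fin n) F) :=
  le_rkw hr.strictMono_comp_sort hc.strictMono_comp_sort
    (by rw [submatrix_matchingMatrix hr hc, Dw_permMatrix]; exact hω _ _)

lemma matchingMatrix_eq_zero {m : ℕ} {r c : Fin m → Fin n} {B : Set (Fin n × Fin n)}
    (hB : ∀ k, (r k, c k) ∈ B) {i j : Fin n} (hij : (i, j) ∉ B) :
    (matchingMatrix r c : Matrix (Fin n) (Fin n) F) i j = 0 := by
  simp only [matchingMatrix, Matrix.of_apply, ite_eq_right_iff, one_ne_zero, imp_false]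
  rintro ⟨k, rfl, rfl⟩
  exact hij (hB k)

end

theorem stmt1 {F : Type*} [Field F] {n : ℕ} (B : Set (Fin n × Fin n))
    (ω : ∀ m : ℕ, Equiv.Perm (Fin m) → F) (hω : ∀ m σ, ω m σ ≠ 0) :
    sSup {r | ∃ A : Matrix (Fin n) (Fin n) F,
        (∀ i j, (i, j) ∉ B → A i j = 0) ∧ rkw ω A = r} = nuB B := by
  apply le_antisymm
  · exact csSup_le' fun _ ⟨A, hA, hr⟩ => hr ▸ rkw_le_nuB hA
  · refine csSup_le' ?_
    rintro m ⟨B₀, hB₀, hM, rfl⟩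
    obtain ⟨r, c, hr, hc, hrc⟩ := hM.exists_injective
    have hB : ∀ k, (r k, c k) ∈ B := fun k => hB₀ (hrc k)
    exact (le_rkw_matchingMatrix hω hr hc).trans <|
      le_csSup ⟨n, fun _ ⟨A, _, hA⟩ => hA ▸ rkw_le ω A⟩
        ⟨matchingMatrix r c, fun _ _ => matchingMatrix_eq_zero hB, rfl⟩
end

section
/- Let F be a field, k ≥ 1, and let A_1,...,A_k ∈ M_n(F) be matrices with q(A_t) = (i_t, j_t), where the pairs (i_1,j_1),...,(i_k,j_k) form a bipartite matching (all i_t distinct, all j_t distinct) and each A_t(i_t,j_t) = 1. Then there exists λ ∈ {0,1}^k and index sets I, J of size k such that the k×k submatrix (Σ_t λ_t A_t)[I|J] has nonzero permanent. -/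
open Matrix

/-!
Sort the rows `i` and the columns `j` of the matching into `I` and `J` and put
`f λ = per ((∑ t, λ t • A t).submatrix I J)`. Expanding `f` row by row, the signed sum of
`f λ` over `λ ∈ {0,1}^k`, with sign `(-1)^#{t | λ t = 0}`, keeps exactly the terms in which every
`A t` supplies at least one row, hence exactly one. Lexicographic minimality of the leading entries
makes this mixed permanent triangular: in its only nonzero term each `A t` supplies its leading
entry `A t (i t) (j t) = 1`. So the signed sum is `1`, and some `f λ` is nonzero.
-/

open Finset Function

theorem eq_id_of_injective_of_forall_le {α : Type*} [LinearOrder α] [WellFoundedLT α]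
    {f : α → α} (hf : Injective f) (hle : ∀ a, f a ≤ a) : f = id := by
  funext a
  induction a using WellFoundedLT.induction with
  | _ a ih =>
    rcases (hle a).lt_or_eq with hlt | heq
    · exact absurd (hf (ih _ hlt)) hlt.ne
    · exact heq

theorem LexLt.map_of_strictMono {k n : ℕ} {I J : Fin k → Fin n} (hI : StrictMono I)
    (hJ : StrictMono J) {p q : Fin k × Fin k} (h : LexLt p q) :
    LexLt (I p.1, J p.2) (I q.1, J q.2) := by
  rcases h with h | ⟨h₁, h₂⟩
  · exact Or.inl (hI h)
  · exact Or.inr ⟨congrArg I h₁, hJ h₂⟩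

section SignedSum

variable {R : Type*} [CommRing R]

theorem sum_bool_sign_mul_indicator_pow (m : ℕ) :
    ∑ c : Bool, (if c then (1 : R) else -1) * (if c then 1 else 0) ^ m = 1 - 0 ^ m := by
  simp only [Fintype.sum_bool, Bool.false_eq_true, if_true, if_false, one_pow, mul_one]
  ring

theorem prod_comp_eq_prod_pow_card_fiber {ι κ : Type*} [Fintype ι] [DecidableEq ι] [Fintype κ]
    (f : ι → R) (τ : κ → ι) : ∏ s, f (τ s) = ∏ t, f t ^ #{s | τ s = t} := by
  rw [← prod_fiberwise univ τ]
  refine prod_congr rfl fun t _ => ?_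
  rw [prod_congr rfl fun s hs => by rw [(mem_filter.mp hs).2], prod_const]

theorem sum_sign_mul_prod_indicator_comp {ι κ : Type*} [Fintype ι] [DecidableEq ι] [Fintype κ]
    (τ : κ → ι) :
    ∑ b : ι → Bool, (∏ t, if b t then (1 : R) else -1) * ∏ s, (if b (τ s) then (1 : R) else 0)
      = if Surjective τ then 1 else 0 := by
  calc _ = ∑ b : ι → Bool, ∏ t, (if b t then (1 : R) else -1) *
          (if b t then 1 else 0) ^ #{s | τ s = t} := by
        refine sum_congr rfl fun b _ => ?_
        rw [prod_comp_eq_prod_pow_card_fiber (fun t => if b t then (1 : R) else 0) τ,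
          prod_mul_distrib]
    _ = ∏ t, (1 - 0 ^ #{s | τ s = t} : R) := by
        simp_rw [← sum_bool_sign_mul_indicator_pow, Fintype.prod_sum]
    _ = if Surjective τ then 1 else 0 := by
        split_ifs with hτ
        · refine prod_eq_one fun t _ => ?_
          obtain ⟨s, hs⟩ := hτ t
          rw [zero_pow (card_ne_zero_of_mem (mem_filter.mpr ⟨mem_univ s, hs⟩)), sub_zero]
        · obtain ⟨t, ht⟩ := not_forall.mp hτ
          refine prod_eq_zero (mem_univ t) ?_
          rw [filter_false_of_mem fun s _ => not_exists.mp ht s, card_empty, pow_zero, sub_self]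

end SignedSum

section Permanent

variable {F : Type*} [Field F] {m : ℕ}

theorem per_sum_smul {ι : Type*} [Fintype ι] [DecidableEq ι] (μ : ι → F)
    (B : ι → Matrix (Fin m) (Fin m) F) :
    per (∑ t, μ t • B t) = ∑ τ : Fin m → ι, (∏ s, μ (τ s)) * per (of fun s => B (τ s) s) := by
  simp only [per, Matrix.sum_apply, Matrix.smul_apply, smul_eq_mul, Fintype.prod_sum, mul_sum,
    prod_mul_distrib, of_apply]
  exact sum_comm

theorem sum_sign_mul_per_sum_indicator_smul {ι : Type*} [Fintype ι] [DecidableEq ι]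
    (B : ι → Matrix (Fin m) (Fin m) F) :
    ∑ b : ι → Bool,
        (∏ t, if b t then (1 : F) else -1) * per (∑ t, (if b t then (1 : F) else 0) • B t)
      = ∑ τ : Fin m → ι, if Surjective τ then per (of fun s => B (τ s) s) else 0 := by
  simp_rw [per_sum_smul, mul_sum]
  rw [sum_comm]
  refine sum_congr rfl fun τ _ => ?_
  simp_rw [← mul_assoc, ← sum_mul, sum_sign_mul_prod_indicator_comp, ite_mul, one_mul, zero_mul]

end Permanent

section LexTriangular

variable {F : Type*} [Field F] {k : ℕ} {B : Fin k → Matrix (Fin k) (Fin k) F}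
  {r c : Equiv.Perm (Fin k)}

theorem eq_of_prod_ne_zero_of_lexLt
    (hlex : ∀ t (p : Fin k × Fin k), LexLt p (r t, c t) → B t p.1 p.2 = 0)
    {τ : Fin k → Fin k} (hτ : Surjective τ) {σ : Equiv.Perm (Fin k)}
    (hprod : ∏ s, B (τ s) s (σ s) ≠ 0) : τ = r.symm ∧ σ = r.symm.trans c := by
  have hnlt : ∀ s, ¬ LexLt (s, σ s) (r (τ s), c (τ s)) := fun s hlt =>
    prod_ne_zero_iff.mp hprod s (mem_univ s) (hlex (τ s) _ hlt)
  have hτinj : Injective τ := Finite.injective_iff_surjective.mpr hτ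
  have hrτ : r ∘ τ = id := eq_id_of_injective_of_forall_le (r.injective.comp hτinj)
    fun s => not_lt.mp fun hlt => hnlt s (Or.inl hlt)
  have hτ_eq : τ = r.symm := funext fun s => r.eq_symm_apply.mpr (congrFun hrτ s)
  have hcτ : c ∘ τ ∘ σ.symm = id := eq_id_of_injective_of_forall_le
    (c.injective.comp (hτinj.comp σ.symm.injective)) fun u => by
      simpa using not_lt.mp fun hlt => hnlt (σ.symm u)
        (Or.inr ⟨(congrFun hrτ _).symm, by simpa using hlt⟩)
  refine ⟨hτ_eq, Equiv.ext fun s => ?_⟩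
  simpa [hτ_eq] using (congrFun hcτ (σ s)).symm

theorem sum_surjective_per_rows_eq_one (hone : ∀ t, B t (r t) (c t) = 1)
    (hlex : ∀ t (p : Fin k × Fin k), LexLt p (r t, c t) → B t p.1 p.2 = 0) :
    ∑ τ : Fin k → Fin k, (if Surjective τ then per (of fun s => B (τ s) s) else 0) = 1 := by
  rw [Fintype.sum_eq_single (⇑r.symm), if_pos r.symm.surjective]
  · unfold per
    rw [Fintype.sum_eq_single (r.symm.trans c)]
    · exact prod_eq_one fun s _ => by simpa using hone (r.symm s)
    · intro σ hσ
      by_contra hprod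
      exact hσ (eq_of_prod_ne_zero_of_lexLt hlex r.symm.surjective hprod).2
  · intro τ hτr
    split_ifs with hτ
    · refine sum_eq_zero fun σ _ => ?_
      by_contra hprod
      exact hτr (eq_of_prod_ne_zero_of_lexLt hlex hτ hprod).1
    · rfl

end LexTriangular

theorem stmt18_general {F : Type*} [Field F] {n k : ℕ}
    (A : Fin k → Matrix (Fin n) (Fin n) F) (i j : Fin k → Fin n)
    (hi : Function.Injective i) (hj : Function.Injective j)
    (hone : ∀ t, A t (i t) (j t) = 1)
    (hq : ∀ t, ∀ p : Fin n × Fin n, LexLt p (i t, j t) → A t p.1 p.2 = 0) :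
    ∃ lam : Fin k → F, (∀ t, lam t = 0 ∨ lam t = 1) ∧
      ∃ I J : Fin k → Fin n, StrictMono I ∧ StrictMono J ∧
        per ((∑ t, lam t • A t).submatrix I J) ≠ 0 := by
  set π := Tuple.sort i
  set ρ := Tuple.sort j
  have hI : StrictMono (i ∘ π) :=
    (Tuple.monotone_sort i).strictMono_of_injective (hi.comp π.injective)
  have hJ : StrictMono (j ∘ ρ) :=
    (Tuple.monotone_sort j).strictMono_of_injective (hj.comp ρ.injective)
  set B : Fin k → Matrix (Fin k) (Fin k) F := fun t => (A t).submatrix (i ∘ π) (j ∘ ρ)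
  have hsum := sum_surjective_per_rows_eq_one (B := B) (r := π.symm) (c := ρ.symm)
    (fun t => by simpa [B] using hone t)
    (fun t p hp => hq t (i (π p.1), j (ρ p.2)) (by simpa using hp.map_of_strictMono hI hJ))
  rw [← sum_sign_mul_per_sum_indicator_smul] at hsum
  obtain ⟨b, -, hb⟩ := exists_ne_zero_of_sum_ne_zero (hsum ▸ one_ne_zero)
  refine ⟨fun t => if b t then 1 else 0, fun t => by cases b t <;> simp, i ∘ π, j ∘ ρ, hI, hJ, ?_⟩
  convert right_ne_zero_of_mul hb using 2
  ext s u
  simp only [B, Matrix.submatrix_apply, Matrix.sum_apply, Matrix.smul_apply]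

theorem stmt18 {F : Type*} [Field F] {n k : ℕ} (hk : 1 ≤ k)
    (A : Fin k → Matrix (Fin n) (Fin n) F) (i j : Fin k → Fin n)
    (hi : Function.Injective i) (hj : Function.Injective j)
    (hone : ∀ t, A t (i t) (j t) = 1)
    (hq : ∀ t, ∀ p : Fin n × Fin n, LexLt p (i t, j t) → A t p.1 p.2 = 0) :
    ∃ lam : Fin k → F, (∀ t, lam t = 0 ∨ lam t = 1) ∧
      ∃ I J : Fin k → Fin n, StrictMono I ∧ StrictMono J ∧
        per ((∑ t, lam t • A t).submatrix I J) ≠ 0 :=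
  stmt18_general A i j hi hj hone hq
end
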